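/- arXiv:2302.02202 — 6 statements merged into one kernel-verified Lean document; each statement's English description precedes it below -/
import Mathlib

section
/- Every nonnegative univariate polynomial with real coefficients is a sum of two squares of polynomials in ℝ[x]. -/
/-!
Induction on the degree. A nonnegative `f` of positive degree has a complex root `z`. If `z` is
real it is a minimum of `f`, hence a double root; otherwise `z` and `conj z` are both roots. Either
way `(X - a)² + b² ∣ f` for some real `a`, `b`. The quotient is again nonnegative (by continuity
at the roots of the divisor), so it is a sum of two squares by induction, and the
Brahmagupta–Fibonacci identity makes sums of two squares closed under products.
-/

open Polynomial

def IsSumTwoSq {R : Type*} [CommRing R] (x : R) : Prop := ∃ a b : R, x = a ^ 2 + b ^ 2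

theorem IsSumTwoSq.mul {R : Type*} [CommRing R] {x y : R} (hx : IsSumTwoSq x)
    (hy : IsSumTwoSq y) : IsSumTwoSq (x * y) := by
  obtain ⟨a, b, rfl⟩ := hx
  obtain ⟨c, d, rfl⟩ := hy
  exact ⟨_, _, sq_add_sq_mul_sq_add_sq⟩

theorem IsSumTwoSq.eval_nonneg {R : Type*} [CommRing R] [LinearOrder R] [IsStrictOrderedRing R]
    {p : R[X]} (hp : IsSumTwoSq p) (x : R) : 0 ≤ p.eval x := by
  obtain ⟨a, b, rfl⟩ := hp
  simp only [eval_add, eval_pow]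
  positivity

namespace Polynomial

theorem eval_nonneg_of_eval_mul_nonneg {q g : ℝ[X]} (hq0 : q ≠ 0) (hq : ∀ x, 0 ≤ q.eval x)
    (hqg : ∀ x, 0 ≤ (q * g).eval x) (x : ℝ) : 0 ≤ g.eval x := by
  have hdense : Dense {x : ℝ | ¬ q.IsRoot x} :=
    (finite_setOfPred_isRoot hq0).countable.dense_compl ℝ
  have hclosed : IsClosed {x : ℝ | 0 ≤ g.eval x} :=
    isClosed_le continuous_const (Polynomial.continuous g)
  refine hclosed.closure_subset_iff.mpr (fun y hy => ?_) (hdense.closure_eq ▸ Set.mem_univ x)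
  have hpos : 0 < q.eval y := (hq y).lt_of_ne' hy
  exact (mul_nonneg_iff_of_pos_left hpos).mp (by simpa only [eval_mul] using hqg y)

theorem sq_X_sub_C_dvd_of_isRoot_of_eval_nonneg {f : ℝ[X]} {r : ℝ} (hf : ∀ x, 0 ≤ f.eval x)
    (hr : f.IsRoot r) : (X - C r) ^ 2 ∣ f := by
  rcases eq_or_ne f 0 with rfl | hf0
  · exact dvd_zero _
  have hmin : IsLocalMin f.eval r :=
    IsMinOn.isLocalMin (s := Set.univ) (fun x _ => hr.eq_zero ▸ hf x) Filter.univ_mem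
  have hderiv : f.derivative.eval r = 0 := by
    simpa only [Polynomial.deriv] using hmin.deriv_eq_zero
  rw [← le_rootMultiplicity_iff hf0]
  exact (one_lt_rootMultiplicity_iff_isRoot hf0).mpr ⟨hr, hderiv⟩

theorem natDegree_X_sub_C_sq_add_C_sq {R : Type*} [CommRing R] [Nontrivial R] (a b : R) :
    ((X - C a) ^ 2 + C b ^ 2).natDegree = 2 := by
  compute_degree!

theorem exists_X_sub_C_sq_add_C_sq_dvd {f : ℝ[X]} (hf : ∀ x, 0 ≤ f.eval x)
    (hdeg : 0 < f.degree) : ∃ a b : ℝ, (X - C a) ^ 2 + C b ^ 2 ∣ f := by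
  obtain ⟨z, hz⟩ := IsAlgClosed.exists_aeval_eq_zero ℂ f hdeg.ne'
  rcases eq_or_ne z.im 0 with him | him
  · have hr : f.IsRoot z.re := by
      have hz_real : z = (z.re : ℂ) := Complex.ext rfl (by simpa using him)
      rw [hz_real, ← Complex.ofRealAm_coe, aeval_algHom_apply] at hz
      simpa using hz
    exact ⟨z.re, 0, by simpa using sq_X_sub_C_dvd_of_isRoot_of_eval_nonneg hf hr⟩
  · refine ⟨z.re, z.im, ?_⟩
    convert quadratic_dvd_of_aeval_eq_zero_im_ne_zero f hz him using 1
    rw [Complex.sq_norm, Complex.normSq_apply]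
    simp only [C_add, C_mul, map_ofNat]
    ring

end Polynomial

theorem nonneg_real_poly_sum_two_squares (f : Polynomial ℝ)
    (hf : ∀ x : ℝ, 0 ≤ f.eval x) :
    ∃ a b : Polynomial ℝ, f = a ^ 2 + b ^ 2 := by
  induction hn : f.natDegree using Nat.strong_induction_on generalizing f with
  | _ n ih =>
  rcases Nat.eq_zero_or_pos n with rfl | hpos
  · rw [eq_C_of_natDegree_eq_zero hn]
    refine ⟨C √(f.coeff 0), 0, ?_⟩
    rw [← C_pow, Real.sq_sqrt (coeff_zero_eq_eval_zero f ▸ hf 0)]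
    ring
  obtain ⟨a, b, g, rfl⟩ :=
    exists_X_sub_C_sq_add_C_sq_dvd hf (natDegree_pos_iff_degree_pos.mp (hn ▸ hpos))
  set q : ℝ[X] := (X - C a) ^ 2 + C b ^ 2
  have hq : IsSumTwoSq q := ⟨_, _, rfl⟩
  have hq0 : q ≠ 0 :=
    ne_zero_of_natDegree_gt (n := 0) (by rw [natDegree_X_sub_C_sq_add_C_sq]; norm_num)
  have hg0 : g ≠ 0 := right_ne_zero_of_mul (ne_zero_of_natDegree_gt (hn ▸ hpos))
  have hg : ∀ x, 0 ≤ g.eval x := eval_nonneg_of_eval_mul_nonneg hq0 hq.eval_nonneg hf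
  have hdeg : g.natDegree < n := by
    rw [← hn, natDegree_mul hq0 hg0, natDegree_X_sub_C_sq_add_C_sq]
    omega
  exact hq.mul (ih _ hdeg g hg rfl)
end

section
/- A square-free polynomial f ∈ ℚ[x], nonnegative on ℝ, is a sum of two squares of polynomials in ℚ[x] if and only if the leading coefficient of f is a sum of two squares of rational numbers and −1 is a square in the quotient ring ℚ[x]/(p) for every monic irreducible factor p of f. -/
open Polynomial

/-!
If an irreducible `p` divides a squarefree `a² + b²`, then `p ∤ b`, so `a / b` is a square root
of `-1` modulo `p`. Conversely, let `p` be monic of degree `n` with `p ∣ g² + 1`. Counting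
dimensions (a polynomial Thue lemma) gives `(a, b) ≠ 0` of degrees `≤ n / 2` with `p ∣ a + g b`;
then `p` divides `a² + b² ≡ b² (g² + 1)`, whose degree is at most `n` and whose leading
coefficient `c` is a nonzero sum of two squares, so `a² + b² = c p` and
`p = ((s / c)² + (t / c)²) (a² + b²)` for `c = s² + t²`. As sums of two squares are closed under
products, `f = lc f · ∏ p` is one.
-/

namespace Polynomial

variable {R K : Type*}

theorem coeff_sq_add_sq_of_natDegree_le [CommSemiring R] {a b : R[X]} {n : ℕ}
    (ha : a.natDegree ≤ n) (hb : b.natDegree ≤ n) :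
    (a ^ 2 + b ^ 2).coeff (2 * n) = a.coeff n ^ 2 + b.coeff n ^ 2 := by
  rw [coeff_add, coeff_pow_of_natDegree_le ha, coeff_pow_of_natDegree_le hb]

theorem exists_natDegree_le_coeff_ne_zero [Semiring R] {a b : R[X]} (h : a ≠ 0 ∨ b ≠ 0) :
    ∃ n, a.natDegree ≤ n ∧ b.natDegree ≤ n ∧ (a.coeff n ≠ 0 ∨ b.coeff n ≠ 0) := by
  wlog hab : b.natDegree ≤ a.natDegree generalizing a b
  · obtain ⟨n, hb, ha, hn⟩ := this h.symm (le_of_not_ge hab)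
    exact ⟨n, ha, hb, hn.symm⟩
  rcases eq_or_ne a 0 with rfl | ha
  · exact ⟨b.natDegree, by simp, le_rfl, Or.inr (leadingCoeff_ne_zero.2 (by simpa using h))⟩
  · exact ⟨a.natDegree, le_rfl, hab, Or.inl (leadingCoeff_ne_zero.2 ha)⟩

section Ordered

variable [CommRing R] [LinearOrder R] [IsStrictOrderedRing R]

theorem leadingCoeff_sq_add_sq_of_natDegree_le {a b : R[X]} {n : ℕ}
    (ha : a.natDegree ≤ n) (hb : b.natDegree ≤ n) (hn : a.coeff n ≠ 0 ∨ b.coeff n ≠ 0) :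
    (a ^ 2 + b ^ 2).leadingCoeff = a.coeff n ^ 2 + b.coeff n ^ 2 := by
  have hcoeff := coeff_sq_add_sq_of_natDegree_le ha hb
  have hne : a.coeff n ^ 2 + b.coeff n ^ 2 ≠ 0 := by
    rw [sq, sq, Ne, mul_self_add_mul_self_eq_zero, not_and_or]
    exact hn
  have hdeg : (a ^ 2 + b ^ 2).natDegree = 2 * n :=
    natDegree_eq_of_le_of_coeff_ne_zero
      (natDegree_add_le_of_degree_le (natDegree_pow_le_of_le 2 ha) (natDegree_pow_le_of_le 2 hb))
      (hcoeff ▸ hne)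
  rw [leadingCoeff, hdeg, hcoeff]

theorem sq_add_sq_eq_zero_iff {a b : R[X]} : a ^ 2 + b ^ 2 = 0 ↔ a = 0 ∧ b = 0 := by
  refine ⟨fun h => ?_, fun ⟨ha, hb⟩ => by simp [ha, hb]⟩
  by_contra hab
  obtain ⟨n, ha, hb, hn⟩ := exists_natDegree_le_coeff_ne_zero (not_and_or.1 hab)
  have := leadingCoeff_sq_add_sq_of_natDegree_le ha hb hn
  rw [h, leadingCoeff_zero, sq, sq, eq_comm, mul_self_add_mul_self_eq_zero] at this
  exact not_and_or.2 hn this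

theorem exists_leadingCoeff_sq_add_sq_eq (a b : R[X]) :
    ∃ s t : R, (a ^ 2 + b ^ 2).leadingCoeff = s ^ 2 + t ^ 2 := by
  by_cases hab : a = 0 ∧ b = 0
  · exact ⟨0, 0, by simp [hab.1, hab.2]⟩
  obtain ⟨n, ha, hb, hn⟩ := exists_natDegree_le_coeff_ne_zero (not_and_or.1 hab)
  exact ⟨_, _, leadingCoeff_sq_add_sq_of_natDegree_le ha hb hn⟩

end Ordered

theorem exists_natDegree_le_dvd_add_mul [Field K] {p : K[X]} (hp : p ≠ 0) (g : K[X]) {m : ℕ}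
    (hm : p.natDegree < 2 * (m + 1)) :
    ∃ a b : K[X], ¬(a = 0 ∧ b = 0) ∧ a.natDegree ≤ m ∧ b.natDegree ≤ m ∧ p ∣ a + g * b := by
  let V := degreeLT K (m + 1)
  have : FiniteDimensional K V := (degreeLTEquiv K (m + 1)).symm.finiteDimensional
  let pb := AdjoinRoot.powerBasis hp
  have : FiniteDimensional K (AdjoinRoot p) := pb.finite
  let L : V × V →ₗ[K] AdjoinRoot p :=
    (AdjoinRoot.mkₐ p).toLinearMap ∘ₗ V.subtype.coprod (LinearMap.mulLeft K g ∘ₗ V.subtype)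
  have hrank : Module.finrank K (AdjoinRoot p) < Module.finrank K (V × V) := by
    rw [pb.finrank, AdjoinRoot.powerBasis_dim, Module.finrank_prod,
      (degreeLTEquiv K (m + 1)).finrank_eq, Module.finrank_fin_fun]
    omega
  obtain ⟨⟨a, b⟩, hker, hne⟩ :=
    Submodule.exists_mem_ne_zero_of_ne_bot (L.ker_ne_bot_of_finrank_lt hrank)
  refine ⟨a, b, ?_, ?_, ?_, AdjoinRoot.mk_eq_zero.1 hker⟩
  · simpa [Prod.ext_iff] using hne
  all_goals exact natDegree_le_of_degree_le (Order.le_of_lt_succ (mem_degreeLT.1 (Subtype.prop _)))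

theorem exists_sq_add_sq_of_dvd_sq_add_one [Field K] [LinearOrder K] [IsStrictOrderedRing K]
    {p g : K[X]} (hp : p.Monic) (hg : p ∣ g ^ 2 + 1) : ∃ a b : K[X], p = a ^ 2 + b ^ 2 := by
  obtain ⟨a, b, hab, ha, hb, hdvd⟩ :=
    exists_natDegree_le_dvd_add_mul hp.ne_zero g (m := p.natDegree / 2) (by omega)
  have hsum : p ∣ a ^ 2 + b ^ 2 := by
    rw [show a ^ 2 + b ^ 2 = (a + g * b) * (a - g * b) + b ^ 2 * (g ^ 2 + 1) by ring]
    exact dvd_add (dvd_mul_of_dvd_left hdvd _) (dvd_mul_of_dvd_right hg _)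
  have hdeg : (a ^ 2 + b ^ 2).natDegree ≤ p.natDegree :=
    natDegree_add_le_of_degree_le ((natDegree_pow_le_of_le 2 ha).trans (by omega))
      ((natDegree_pow_le_of_le 2 hb).trans (by omega))
  set c := (a ^ 2 + b ^ 2).leadingCoeff
  have hc : c ≠ 0 := leadingCoeff_ne_zero.2 (mt sq_add_sq_eq_zero_iff.1 hab)
  obtain ⟨s, t, hst⟩ := exists_leadingCoeff_sq_add_sq_eq a b
  have hp_eq : p = C c⁻¹ * (a ^ 2 + b ^ 2) := by
    rw [eq_leadingCoeff_mul_of_monic_of_dvd_of_natDegree_le hp hsum hdeg, ← mul_assoc, ← C_mul,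
      inv_mul_cancel₀ hc, C_1, one_mul]
  have hc_inv : C c⁻¹ = C (s / c) ^ 2 + C (t / c) ^ 2 := by
    rw [← C_pow, ← C_pow, ← C_add]
    congr 1
    field_simp
    exact hst
  exact hp_eq ▸ sq_add_sq_mul hc_inv rfl

theorem exists_sq_add_sq_of_sq_eq_neg_one [Field K] [LinearOrder K] [IsStrictOrderedRing K]
    {p : K[X]} (hp : p.Monic) {u : AdjoinRoot p} (hu : u ^ 2 = -1) :
    ∃ a b : K[X], p = a ^ 2 + b ^ 2 := by
  obtain ⟨g, rfl⟩ := AdjoinRoot.mk_surjective u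
  exact exists_sq_add_sq_of_dvd_sq_add_one (g := g) hp (AdjoinRoot.mk_eq_zero.1 (by simp [hu]))

theorem exists_sq_eq_neg_one_of_dvd_of_squarefree [Field K] {p a b : K[X]} (hp : Irreducible p)
    (hsf : Squarefree (a ^ 2 + b ^ 2)) (hdvd : p ∣ a ^ 2 + b ^ 2) :
    ∃ u : AdjoinRoot p, u ^ 2 = -1 := by
  have hpb : ¬p ∣ b := by
    intro hpb
    have hpa : p ∣ a := hp.prime.dvd_of_dvd_pow ((dvd_add_left (dvd_pow hpb two_ne_zero)).1 hdvd)
    refine hp.not_isUnit (hsf p ?_)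
    rw [sq, sq]
    exact dvd_add (mul_dvd_mul hpa hpa) (mul_dvd_mul hpb hpb)
  have : Fact (Irreducible p) := ⟨hp⟩
  have hb : AdjoinRoot.mk p b ≠ 0 := mt AdjoinRoot.mk_eq_zero.1 hpb
  have hab : AdjoinRoot.mk p a ^ 2 + AdjoinRoot.mk p b ^ 2 = 0 := by
    simpa using AdjoinRoot.mk_eq_zero.2 hdvd
  refine ⟨AdjoinRoot.mk p a / AdjoinRoot.mk p b, ?_⟩
  field_simp
  linear_combination hab

theorem exists_sq_add_sq_of_forall_monic_irreducible_dvd [Field K] {f : K[X]}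
    (hlc : ∃ s t : K, f.leadingCoeff = s ^ 2 + t ^ 2)
    (hfac : ∀ p : K[X], p.Monic → Irreducible p → p ∣ f → ∃ a b : K[X], p = a ^ 2 + b ^ 2) :
    ∃ a b : K[X], f = a ^ 2 + b ^ 2 := by
  classical
  rcases eq_or_ne f 0 with rfl | hf
  · exact ⟨0, 0, by simp⟩
  obtain ⟨s, t, hst⟩ := hlc
  have hprod :
      ∃ a b : K[X], (UniqueFactorizationMonoid.normalizedFactors f).prod = a ^ 2 + b ^ 2 := by
    refine Multiset.prod_induction (fun q => ∃ a b : K[X], q = a ^ 2 + b ^ 2) _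
      (fun _ _ ⟨_, _, hx⟩ ⟨_, _, hy⟩ => sq_add_sq_mul hx hy) ⟨1, 0, by ring⟩ fun q hq => ?_
    obtain ⟨hirr, hm, hdvd⟩ := (Polynomial.mem_normalizedFactors_iff hf).1 hq
    exact hfac q hm hirr hdvd
  obtain ⟨a, b, hab⟩ := hprod
  rw [← leadingCoeff_mul_prod_normalizedFactors f, hst, hab]
  exact sq_add_sq_mul (x := C s) (y := C t) (by simp) rfl

end Polynomial

theorem squarefree_sum_two_squares_iff_general (f : Polynomial ℚ) (hsf : Squarefree f) :
    (∃ a b : Polynomial ℚ, f = a ^ 2 + b ^ 2) ↔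
      ((∃ p q : ℚ, f.leadingCoeff = p ^ 2 + q ^ 2) ∧
        ∀ p : Polynomial ℚ, p.Monic → Irreducible p → p ∣ f →
          ∃ u : AdjoinRoot p, u ^ 2 = -1) := by
  constructor
  · rintro ⟨a, b, rfl⟩
    exact ⟨exists_leadingCoeff_sq_add_sq_eq a b,
      fun p _ hp hdvd => exists_sq_eq_neg_one_of_dvd_of_squarefree hp hsf hdvd⟩
  · rintro ⟨hlc, hfac⟩
    refine exists_sq_add_sq_of_forall_monic_irreducible_dvd hlc fun p hm hp hdvd => ?_
    obtain ⟨u, hu⟩ := hfac p hm hp hdvd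
    exact exists_sq_add_sq_of_sq_eq_neg_one hm hu

theorem squarefree_sum_two_squares_iff (f : Polynomial ℚ) (hsf : Squarefree f)
    (hnn : ∀ x : ℝ, 0 ≤ (f.map (algebraMap ℚ ℝ)).eval x) :
    (∃ a b : Polynomial ℚ, f = a ^ 2 + b ^ 2) ↔
      ((∃ p q : ℚ, f.leadingCoeff = p ^ 2 + q ^ 2) ∧
        ∀ p : Polynomial ℚ, p.Monic → Irreducible p → p ∣ f →
          ∃ u : AdjoinRoot p, u ^ 2 = -1) :=
  squarefree_sum_two_squares_iff_general f hsf
end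

section
/- If p ∈ ℚ[x] is a monic irreducible polynomial such that −1 is a square in ℚ[x]/(p), then p factors in ℚ(i)[x] as a product p = g·h̄ where h̄ is the complex conjugate of g; consequently, writing g = a + b·i with a, b ∈ ℚ[x], one has p = a² + b². -/
/-!
Write `L = K(ω)` with `ω² = a` (here `K = ℚ`, `a = -1`). If `u = q mod p` squares to `a`,
then `p ∣ q² - a = (q + ω)(q - ω)` in `L[X]`, and since `deg q < deg p`, `p` divides neither
factor, so `p` is reducible over `L`. For a proper monic factor `g = A + ωB` (`A, B ∈ K[X]`)
of `p`, the norm `g·ḡ = A² - aB²` lies in `K[X]`, is monic, divides `p²`, and has degree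
strictly between `0` and `2 deg p`. Since `p` is irreducible, this forces `g·ḡ = p`.
-/

open Polynomial QuadraticAlgebra

theorem AdjoinRoot.exists_degree_lt_dvd_sq_sub_C {R : Type*} [CommRing R] [Nontrivial R]
    {p : R[X]} (hm : p.Monic) {a : R} (h : IsSquare (AdjoinRoot.of p a)) :
    ∃ q : R[X], q.degree < p.degree ∧ p ∣ q ^ 2 - C a := by
  obtain ⟨u, hu⟩ := h
  obtain ⟨q, rfl⟩ := mk_surjective u
  refine ⟨q %ₘ p, degree_modByMonic_lt q hm, ?_⟩
  have hq : mk p (q %ₘ p) = mk p q := by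
    rw [← modByMonicHom_mk hm]; exact mk_leftInverse hm _
  rw [← mk_eq_zero, map_sub, map_pow, hq, mk_C, hu, sq, sub_self]

theorem Polynomial.Monic.eq_of_dvd_prime_sq {R : Type*} [CommRing R] [IsDomain R] {n p : R[X]}
    (hn : n.Monic) (hp : Prime p) (hpm : p.Monic) (hdvd : n ∣ p ^ 2)
    (h0 : n.natDegree ≠ 0) (h2 : n.natDegree ≠ 2 * p.natDegree) : n = p := by
  obtain ⟨i, hi, hassoc⟩ := (dvd_prime_pow hp 2).mp hdvd
  have hni : n = p ^ i := eq_of_monic_of_associated hn (hpm.pow i) hassoc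
  have hdeg : n.natDegree = i * p.natDegree := by rw [hni, hpm.natDegree_pow]
  interval_cases i
  · exact absurd (by simpa using hdeg) h0
  · simpa using hni
  · contradiction

namespace QuadraticAlgebra

section

variable {R : Type*} [CommRing R] {a b : R}

@[simp]
theorem star_algebraMap (r : R) :
    star (algebraMap R (QuadraticAlgebra R a b) r) = algebraMap R _ r := by
  ext <;> simp

theorem star_omega : star (ω : QuadraticAlgebra R a b) = algebraMap R _ b - ω := by
  ext <;> simp

theorem C_omega_mul_C_omega :
    C (ω : QuadraticAlgebra R a 0) * C ω = C (algebraMap R (QuadraticAlgebra R a 0) a) := by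
  rw [← map_mul, omega_mul_omega_eq_algebraMap, map_zero, zero_mul, add_zero]

theorem map_starRingEnd_map_algebraMap (A : R[X]) :
    (A.map (algebraMap R (QuadraticAlgebra R a b))).map (starRingEnd _) =
      A.map (algebraMap R _) := by
  rw [Polynomial.map_map]
  congr 1
  exact RingHom.ext star_algebraMap

theorem exists_eq_map_add_C_omega_mul_map (G : (QuadraticAlgebra R a b)[X]) :
    ∃ A B : R[X], G = A.map (algebraMap R _) + C ω * B.map (algebraMap R _) := by
  induction G using Polynomial.induction_on' with
  | add G H hG hH =>
    obtain ⟨A, B, rfl⟩ := hG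
    obtain ⟨A', B', rfl⟩ := hH
    exact ⟨A + A', B + B', by simp only [Polynomial.map_add]; ring⟩
  | monomial n z =>
    refine ⟨monomial n z.re, monomial n z.im, ?_⟩
    rw [map_monomial, map_monomial, C_mul_monomial, ← map_add]
    congr 1
    ext <;> simp

theorem exists_map_eq_mul_map_starRingEnd (G : (QuadraticAlgebra R a 0)[X]) :
    ∃ A B : R[X], (A ^ 2 - C a * B ^ 2).map (algebraMap R _) = G * G.map (starRingEnd _) := by
  obtain ⟨A, B, rfl⟩ := exists_eq_map_add_C_omega_mul_map G
  refine ⟨A, B, ?_⟩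
  simp only [Polynomial.map_add, Polynomial.map_mul, Polynomial.map_sub, Polynomial.map_pow,
    map_C, map_starRingEnd_map_algebraMap, starRingEnd_apply, star_omega, map_zero, zero_sub,
    map_neg]
  linear_combination B.map (algebraMap R _) ^ 2 * C_omega_mul_C_omega (R := R)

end

section

variable {K : Type*} [Field K] {a : K} [Fact (∀ r : K, r ^ 2 ≠ a + 0 * r)]

theorem not_irreducible_map_of_dvd_sq_sub_C {p q : K[X]} (hp : 0 < p.degree)
    (hq : q.degree < p.degree) (hdvd : p ∣ q ^ 2 - C a) :
    ¬Irreducible (p.map (algebraMap K (QuadraticAlgebra K a 0))) := by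
  set φ := algebraMap K (QuadraticAlgebra K a 0)
  have hfactor : (q ^ 2 - C a).map φ = (q.map φ + C ω) * (q.map φ + C (-ω)) := by
    rw [Polynomial.map_sub, Polynomial.map_pow, map_C, map_neg]
    linear_combination C_omega_mul_C_omega (R := K)
  have hnot_dvd : ∀ z : QuadraticAlgebra K a 0, z.im ≠ 0 → ¬p.map φ ∣ q.map φ + C z := by
    intro z hz
    refine not_dvd_of_degree_lt (fun h => hz ?_) ?_
    · simpa [φ] using congrArg (fun G => (G.coeff 0).im) h
    · rw [degree_map]
      exact (degree_add_le _ _).trans_lt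
        (max_lt (by rwa [degree_map]) (degree_C_le.trans_lt hp))
  intro hirr
  rcases hirr.prime.dvd_or_dvd (hfactor ▸ Polynomial.map_dvd φ hdvd) with h | h
  · exact hnot_dvd ω (by simp) h
  · exact hnot_dvd (-ω) (by simp) h

end

end QuadraticAlgebra

theorem Polynomial.Monic.exists_eq_sq_sub_C_mul_sq {K : Type*} [Field K] {a : K}
    (ha : ∀ r : K, r ^ 2 ≠ a) {p : K[X]} (hm : p.Monic) (hirr : Irreducible p)
    (hsq : IsSquare (AdjoinRoot.of p a)) : ∃ A B : K[X], p = A ^ 2 - C a * B ^ 2 := by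
  have : Fact (∀ r : K, r ^ 2 ≠ a + 0 * r) := ⟨by simpa using ha⟩
  set φ := algebraMap K (QuadraticAlgebra K a 0)
  obtain ⟨q, hq, hdvd⟩ := AdjoinRoot.exists_degree_lt_dvd_sq_sub_C hm hsq
  have hp : 0 < p.degree := degree_pos_of_irreducible hirr
  obtain ⟨g, h, hg, hh, hgh, hg0, hh0⟩ : ∃ g h : (QuadraticAlgebra K a 0)[X],
      g.Monic ∧ h.Monic ∧ g * h = p.map φ ∧ g.natDegree ≠ 0 ∧ h.natDegree ≠ 0 := by
    have := QuadraticAlgebra.not_irreducible_map_of_dvd_sq_sub_C hp hq hdvd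
    rw [(hm.map φ).irreducible_iff_natDegree] at this
    push Not at this
    refine this fun h1 => hp.ne ?_
    rw [← Polynomial.degree_map p φ, h1, degree_one]
  obtain ⟨A, B, hAB⟩ := QuadraticAlgebra.exists_map_eq_mul_map_starRingEnd g
  have hmonic : (A ^ 2 - C a * B ^ 2).Monic := monic_map_iff.mp (hAB ▸ hg.mul (hg.map _))
  have hdeg : (A ^ 2 - C a * B ^ 2).natDegree = 2 * g.natDegree := by
    rw [← Polynomial.natDegree_map φ, hAB, hg.natDegree_mul (hg.map _),
      natDegree_map_eq_of_injective star_injective, two_mul]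
  have hpdeg : p.natDegree = g.natDegree + h.natDegree := by
    rw [← Polynomial.natDegree_map φ, ← hgh, hg.natDegree_mul hh]
  refine ⟨A, B, (hmonic.eq_of_dvd_prime_sq hirr.prime hm ?_ (by omega) (by omega)).symm⟩
  have hgp : g ∣ p.map φ := Dvd.intro h hgh
  rw [← map_dvd_map φ φ.injective hmonic, hAB, Polynomial.map_pow, sq]
  exact mul_dvd_mul hgp
    (QuadraticAlgebra.map_starRingEnd_map_algebraMap p ▸ Polynomial.map_dvd _ hgp)

theorem irreducible_factors_over_Qi (p : Polynomial ℚ) (hm : p.Monic)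
    (hirr : Irreducible p) (hsq : ∃ u : AdjoinRoot p, u ^ 2 = -1) :
    ∃ a b : Polynomial ℚ,
      p.map (algebraMap ℚ ℂ) =
        (a.map (algebraMap ℚ ℂ) + Polynomial.C Complex.I * b.map (algebraMap ℚ ℂ)) *
        (a.map (algebraMap ℚ ℂ) - Polynomial.C Complex.I * b.map (algebraMap ℚ ℂ)) ∧
      p = a ^ 2 + b ^ 2 := by
  have hneg : ∀ r : ℚ, r ^ 2 ≠ -1 := fun r => by nlinarith [sq_nonneg r]
  obtain ⟨u, hu⟩ := hsq
  obtain ⟨A, B, hAB⟩ := hm.exists_eq_sq_sub_C_mul_sq hneg hirr ⟨u, by simp [← hu, sq]⟩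
  have hp : p = A ^ 2 + B ^ 2 := by rw [hAB, map_neg, map_one]; ring
  refine ⟨A, B, ?_, hp⟩
  have hI : C Complex.I * C Complex.I = -1 := by rw [← map_mul, Complex.I_mul_I, map_neg, map_one]
  rw [hp, Polynomial.map_add, Polynomial.map_pow, Polynomial.map_pow]
  linear_combination B.map (algebraMap ℚ ℂ) ^ 2 * hI
end

section
/- Let f ∈ ℚ[x] be an irreducible polynomial which is a sum of at most 4 squares in ℚ[x] and which has positive degree. Then −1 is a sum of two squares in the number field K = ℚ[x]/(f). -/
open Polynomial

/-- If `-1` is a sum of three squares in a field, it is a sum of two squares. -/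
lemma sum_two_sq_of_sum_three_sq {K : Type*} [Field K] {x y z : K}
    (h : x ^ 2 + y ^ 2 + z ^ 2 = -1) : ∃ a b : K, a ^ 2 + b ^ 2 = -1 := by
  by_cases hz : (1 : K) + z ^ 2 = 0
  · exact ⟨z, 0, by linear_combination hz⟩
  · refine ⟨(x - y * z) / (1 + z ^ 2), (x * z + y) / (1 + z ^ 2), ?_⟩
    have key : (x - y * z) ^ 2 + (x * z + y) ^ 2 = -(1 + z ^ 2) ^ 2 := by
      linear_combination (1 + z ^ 2) * h
    field_simp
    linear_combination key

lemma sum_two_sq_of_sum_four_sq_zero {K : Type*} [Field K] {a b c d : K}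
    (h : a ^ 2 + b ^ 2 + c ^ 2 + d ^ 2 = 0) (ha : a ≠ 0) :
    ∃ x y : K, x ^ 2 + y ^ 2 = -1 := by
  apply sum_two_sq_of_sum_three_sq (x := b / a) (y := c / a) (z := d / a)
  field_simp
  linear_combination h

theorem level_le_two_of_sum_four_squares (f : Polynomial ℚ) (hirr : Irreducible f)
    (hdeg : 0 < f.natDegree)
    (hsos : ∃ p₁ p₂ p₃ p₄ : Polynomial ℚ, f = p₁ ^ 2 + p₂ ^ 2 + p₃ ^ 2 + p₄ ^ 2) :
    ∃ a b : AdjoinRoot f, a ^ 2 + b ^ 2 = -1 := by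
  haveI : Fact (Irreducible f) := ⟨hirr⟩
  obtain ⟨p₁, p₂, p₃, p₄, hf⟩ := hsos
  set q₁ := AdjoinRoot.mk f p₁
  set q₂ := AdjoinRoot.mk f p₂
  set q₃ := AdjoinRoot.mk f p₃
  set q₄ := AdjoinRoot.mk f p₄
  have hsum : q₁ ^ 2 + q₂ ^ 2 + q₃ ^ 2 + q₄ ^ 2 = 0 := by
    have h0 : AdjoinRoot.mk f (p₁ ^ 2 + p₂ ^ 2 + p₃ ^ 2 + p₄ ^ 2) = 0 := by
      rw [← hf]; exact AdjoinRoot.mk_self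
    simpa [q₁, q₂, q₃, q₄] using h0
  by_cases h1 : q₁ ≠ 0
  · exact sum_two_sq_of_sum_four_sq_zero hsum h1
  by_cases h2 : q₂ ≠ 0
  · exact sum_two_sq_of_sum_four_sq_zero (a := q₂) (b := q₁) (c := q₃) (d := q₄) (by linear_combination hsum) h2
  by_cases h3 : q₃ ≠ 0
  · exact sum_two_sq_of_sum_four_sq_zero (a := q₃) (b := q₁) (c := q₂) (d := q₄) (by linear_combination hsum) h3
  by_cases h4 : q₄ ≠ 0
  · exact sum_two_sq_of_sum_four_sq_zero (a := q₄) (b := q₁) (c := q₂) (d := q₃) (by linear_combination hsum) h4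
  -- all zero: contradiction
  exfalso
  push_neg at h1 h2 h3 h4
  have d1 : f ∣ p₁ := AdjoinRoot.mk_eq_zero.mp h1
  have d2 : f ∣ p₂ := AdjoinRoot.mk_eq_zero.mp h2
  have d3 : f ∣ p₃ := AdjoinRoot.mk_eq_zero.mp h3
  have d4 : f ∣ p₄ := AdjoinRoot.mk_eq_zero.mp h4
  have hdvd : f ^ 2 ∣ f := by
    have : f ^ 2 ∣ p₁ ^ 2 + p₂ ^ 2 + p₃ ^ 2 + p₄ ^ 2 := dvd_add (dvd_add (dvd_add (pow_dvd_pow_of_dvd d1 2) (pow_dvd_pow_of_dvd d2 2))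
      (pow_dvd_pow_of_dvd d3 2)) (pow_dvd_pow_of_dvd d4 2)
    rwa [← hf] at this
  have hf0 : f ≠ 0 := fun h0 => by simp [h0] at hdeg
  have := Polynomial.natDegree_le_of_dvd hdvd hf0
  rw [Polynomial.natDegree_pow] at this
  omega
end

section
/- Let f, h, g₁, g₂, g₃, g₄ ∈ ℚ[x] satisfy f·h = g₁² + g₂² + g₃² + g₄² with h of positive degree, and let rⱼ = gⱼ mod h for each j. Then h divides r₁² + r₂² + r₃² + r₄², and the quotient h' = (r₁² + r₂² + r₃² + r₄²)/h satisfies deg h' ≤ deg h − 2; moreover the four polynomials produced by applying Euler's four-square identity to (g₁,g₂,g₃,g₄) and (r₁,r₂,r₃,r₄) are all divisible by h, and after dividing each by h, the resulting quadruple (g'₁,...,g'₄) satisfies f·h' = g'₁² + g'₂² + g'₃² + g'₄². -/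
open Polynomial

theorem descent_step_four_squares (f h g₁ g₂ g₃ g₄ : Polynomial ℚ)
    (hdeg : 0 < h.natDegree)
    (hfh : f * h = g₁ ^ 2 + g₂ ^ 2 + g₃ ^ 2 + g₄ ^ 2) :
    let r₁ := g₁ % h; let r₂ := g₂ % h; let r₃ := g₃ % h; let r₄ := g₄ % h
    h ∣ r₁ ^ 2 + r₂ ^ 2 + r₃ ^ 2 + r₄ ^ 2 ∧
    ((r₁ ^ 2 + r₂ ^ 2 + r₃ ^ 2 + r₄ ^ 2) / h).natDegree ≤ h.natDegree - 2 ∧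
    h ∣ g₁ * r₁ + g₂ * r₂ + g₃ * r₃ + g₄ * r₄ ∧
    h ∣ -(g₁ * r₂) + g₂ * r₁ - g₃ * r₄ + g₄ * r₃ ∧
    h ∣ -(g₁ * r₃) + g₂ * r₄ + g₃ * r₁ - g₄ * r₂ ∧
    h ∣ -(g₁ * r₄) - g₂ * r₃ + g₃ * r₂ + g₄ * r₁ ∧
    f * ((r₁ ^ 2 + r₂ ^ 2 + r₃ ^ 2 + r₄ ^ 2) / h) =
      ((g₁ * r₁ + g₂ * r₂ + g₃ * r₃ + g₄ * r₄) / h) ^ 2 +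
      ((-(g₁ * r₂) + g₂ * r₁ - g₃ * r₄ + g₄ * r₃) / h) ^ 2 +
      ((-(g₁ * r₃) + g₂ * r₄ + g₃ * r₁ - g₄ * r₂) / h) ^ 2 +
      ((-(g₁ * r₄) - g₂ * r₃ + g₃ * r₂ + g₄ * r₁) / h) ^ 2 := by
  intro r₁ r₂ r₃ r₄
  have h0 : h ≠ 0 := fun hh => by simp [hh] at hdeg
  -- each gⱼ = h * qⱼ + rⱼ
  have e₁ : g₁ = h * (g₁ / h) + r₁ := (EuclideanDomain.div_add_mod g₁ h).symm
  have e₂ : g₂ = h * (g₂ / h) + r₂ := (EuclideanDomain.div_add_mod g₂ h).symm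
  have e₃ : g₃ = h * (g₃ / h) + r₃ := (EuclideanDomain.div_add_mod g₃ h).symm
  have e₄ : g₄ = h * (g₄ / h) + r₄ := (EuclideanDomain.div_add_mod g₄ h).symm
  have hd₁ : h ∣ g₁ - r₁ := ⟨g₁ / h, by linear_combination e₁⟩
  have hd₂ : h ∣ g₂ - r₂ := ⟨g₂ / h, by linear_combination e₂⟩
  have hd₃ : h ∣ g₃ - r₃ := ⟨g₃ / h, by linear_combination e₃⟩
  have hd₄ : h ∣ g₄ - r₄ := ⟨g₄ / h, by linear_combination e₄⟩
  set S := r₁ ^ 2 + r₂ ^ 2 + r₃ ^ 2 + r₄ ^ 2 with hSdef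
  have hdS : h ∣ S := by
    have : h ∣ (g₁ ^ 2 + g₂ ^ 2 + g₃ ^ 2 + g₄ ^ 2) - S := by
      have : (g₁ ^ 2 + g₂ ^ 2 + g₃ ^ 2 + g₄ ^ 2) - S =
          (g₁ - r₁) * (g₁ + r₁) + (g₂ - r₂) * (g₂ + r₂) +
          (g₃ - r₃) * (g₃ + r₃) + (g₄ - r₄) * (g₄ + r₄) := by ring
      rw [this]
      exact dvd_add (dvd_add (dvd_add (hd₁.mul_right _) (hd₂.mul_right _))
        (hd₃.mul_right _)) (hd₄.mul_right _)
    have hG : h ∣ g₁ ^ 2 + g₂ ^ 2 + g₃ ^ 2 + g₄ ^ 2 := ⟨f, by linear_combination -hfh⟩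
    have := dvd_sub hG this
    simpa using this
  set A := g₁ * r₁ + g₂ * r₂ + g₃ * r₃ + g₄ * r₄ with hAdef
  set B := -(g₁ * r₂) + g₂ * r₁ - g₃ * r₄ + g₄ * r₃ with hBdef
  set C := -(g₁ * r₃) + g₂ * r₄ + g₃ * r₁ - g₄ * r₂ with hCdef
  set D := -(g₁ * r₄) - g₂ * r₃ + g₃ * r₂ + g₄ * r₁ with hDdef
  have hdA : h ∣ A := by
    have : A = (g₁ - r₁) * r₁ + (g₂ - r₂) * r₂ + (g₃ - r₃) * r₃ + (g₄ - r₄) * r₄ + S := by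
      rw [hSdef]; ring
    rw [this]
    exact dvd_add (dvd_add (dvd_add (dvd_add (hd₁.mul_right _) (hd₂.mul_right _))
      (hd₃.mul_right _)) (hd₄.mul_right _)) hdS
  have hdB : h ∣ B := by
    have : B = -((g₁ - r₁) * r₂) + (g₂ - r₂) * r₁ - (g₃ - r₃) * r₄ + (g₄ - r₄) * r₃ := by
      rw [hBdef]; ring
    rw [this]
    exact dvd_add (dvd_sub (dvd_add ((hd₁.mul_right _).neg_right) (hd₂.mul_right _))
      (hd₃.mul_right _)) (hd₄.mul_right _)
  have hdC : h ∣ C := by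
    have : C = -((g₁ - r₁) * r₃) + (g₂ - r₂) * r₄ + (g₃ - r₃) * r₁ - (g₄ - r₄) * r₂ := by
      rw [hCdef]; ring
    rw [this]
    exact dvd_sub (dvd_add (dvd_add ((hd₁.mul_right _).neg_right) (hd₂.mul_right _))
      (hd₃.mul_right _)) (hd₄.mul_right _)
  have hdD : h ∣ D := by
    have : D = -((g₁ - r₁) * r₄) - (g₂ - r₂) * r₃ + (g₃ - r₃) * r₂ + (g₄ - r₄) * r₁ := by
      rw [hDdef]; ring
    rw [this]
    exact dvd_add (dvd_add (dvd_sub ((hd₁.mul_right _).neg_right) (hd₂.mul_right _))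
      (hd₃.mul_right _)) (hd₄.mul_right _)
  have hScancel : h * (S / h) = S := EuclideanDomain.mul_div_cancel' h0 hdS
  have hAcancel : h * (A / h) = A := EuclideanDomain.mul_div_cancel' h0 hdA
  have hBcancel : h * (B / h) = B := EuclideanDomain.mul_div_cancel' h0 hdB
  have hCcancel : h * (C / h) = C := EuclideanDomain.mul_div_cancel' h0 hdC
  have hDcancel : h * (D / h) = D := EuclideanDomain.mul_div_cancel' h0 hdD
  refine ⟨hdS, ?_, hdA, hdB, hdC, hdD, ?_⟩
  · -- degree bound
    rcases eq_or_ne (S / h) 0 with hs | hs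
    · simp [hs]
    · have hrdeg : ∀ g : Polynomial ℚ, (g % h).natDegree ≤ h.natDegree - 1 := by
        intro g
        have := EuclideanDomain.mod_lt g h0
        have h2 : (g % h).degree < h.degree := this
        rcases eq_or_ne (g % h) 0 with hg | hg
        · simp [hg]
        · have := natDegree_lt_natDegree hg h2
          omega
      have hSdeg : S.natDegree ≤ 2 * h.natDegree - 2 := by
        have b : ∀ g : Polynomial ℚ, ((g % h) ^ 2).natDegree ≤ 2 * h.natDegree - 2 := by
          intro g
          calc ((g % h) ^ 2).natDegree ≤ 2 * (g % h).natDegree := natDegree_pow_le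
            _ ≤ 2 * (h.natDegree - 1) := by have := hrdeg g; omega
            _ = 2 * h.natDegree - 2 := by omega
        calc S.natDegree ≤ max (max (max (r₁^2).natDegree (r₂^2).natDegree)
            (r₃^2).natDegree) (r₄^2).natDegree := by
              refine le_trans (natDegree_add_le _ _) ?_
              refine max_le (le_trans (natDegree_add_le _ _) ?_) (le_max_right _ _)
              refine max_le (le_trans (natDegree_add_le _ _) ?_)
                (le_trans (le_max_right _ _) (le_max_left _ _))
              exact max_le (le_trans (le_max_left _ _)
                (le_trans (le_max_left _ _) (le_max_left _ _)))
                (le_trans (le_max_right _ _) (le_trans (le_max_left _ _) (le_max_left _ _)))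
          _ ≤ 2 * h.natDegree - 2 := by
              simp only [max_le_iff]
              exact ⟨⟨⟨b g₁, b g₂⟩, b g₃⟩, b g₄⟩
      have hmul : (h * (S / h)).natDegree = h.natDegree + (S / h).natDegree :=
        natDegree_mul h0 hs
      rw [hScancel] at hmul
      omega
  · -- Euler identity
    have hEuler : (g₁ ^ 2 + g₂ ^ 2 + g₃ ^ 2 + g₄ ^ 2) * S =
        A ^ 2 + B ^ 2 + C ^ 2 + D ^ 2 := by
      rw [hSdef, hAdef, hBdef, hCdef, hDdef]; ring
    have hkey : h ^ 2 * (f * (S / h)) =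
        h ^ 2 * ((A / h) ^ 2 + (B / h) ^ 2 + (C / h) ^ 2 + (D / h) ^ 2) := by
      calc h ^ 2 * (f * (S / h)) = (f * h) * (h * (S / h)) := by ring
        _ = (g₁ ^ 2 + g₂ ^ 2 + g₃ ^ 2 + g₄ ^ 2) * S := by rw [hfh, hScancel]
        _ = A ^ 2 + B ^ 2 + C ^ 2 + D ^ 2 := hEuler
        _ = (h * (A / h)) ^ 2 + (h * (B / h)) ^ 2 + (h * (C / h)) ^ 2 + (h * (D / h)) ^ 2 := by
            rw [hAcancel, hBcancel, hCcancel, hDcancel]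
        _ = h ^ 2 * ((A / h) ^ 2 + (B / h) ^ 2 + (C / h) ^ 2 + (D / h) ^ 2) := by ring
    exact mul_left_cancel₀ (pow_ne_zero 2 h0) hkey
end

section
/- The level of a non-real field is a power of 2. In particular, a field in which −1 is a sum of three squares already has −1 expressible as a sum of two squares. -/
open Finset Matrix

lemma flipMul {K : Type*} [Field K] {N : Type*} [Fintype N] [DecidableEq N]
    (M : Matrix N N K) (c : K) (hc : c ≠ 0) (h : M * Mᵀ = c • 1) : Mᵀ * M = c • 1 := by
  have h1 : M * (c⁻¹ • Mᵀ) = 1 := by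
    rw [Matrix.mul_smul, h, smul_smul, inv_mul_cancel₀ hc, one_smul]
  have h2 : (c⁻¹ • Mᵀ) * M = 1 := mul_eq_one_comm.mp h1
  calc Mᵀ * M = c • ((c⁻¹ • Mᵀ) * M) := by
        rw [Matrix.smul_mul, smul_smul, mul_inv_cancel₀ hc, one_smul]
    _ = c • 1 := by rw [h2]

lemma smul_one_blocks {K : Type*} [Field K] {n : Type*} [Fintype n] [DecidableEq n] (c : K) :
    Matrix.fromBlocks (c • (1 : Matrix n n K)) 0 0 (c • (1 : Matrix n n K))
      = c • (1 : Matrix (n ⊕ n) (n ⊕ n) K) := by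
  have h0 : (0 : Matrix n n K) = c • 0 := by simp
  rw [h0, ← Matrix.fromBlocks_smul, Matrix.fromBlocks_one]

lemma pfister_matrix {K : Type*} [Field K] : ∀ (k : ℕ) (x : Fin (2^k) → K),
    ∃ M : Matrix (Fin (2^k)) (Fin (2^k)) K, M * Mᵀ = (∑ i, x i ^ 2) • 1 := by
  intro k
  induction k with
  | zero =>
    intro x
    refine ⟨Matrix.of fun _ _ => x 0, ?_⟩
    ext i j
    fin_cases i; fin_cases j
    simp [Matrix.mul_apply, sq]
  | succ k ih =>
    intro x
    have hcard : 2 ^ k + 2 ^ k = 2 ^ (k + 1) := by rw [pow_succ]; ring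
    let e : Fin (2^k) ⊕ Fin (2^k) ≃ Fin (2^(k+1)) := finSumFinEquiv.trans (finCongr hcard)
    set x₁ : Fin (2^k) → K := fun i => x (e (Sum.inl i)) with hx1
    set x₂ : Fin (2^k) → K := fun i => x (e (Sum.inr i)) with hx2
    set A := ∑ i, x₁ i ^ 2 with hA
    set B := ∑ i, x₂ i ^ 2 with hB
    have hsum : ∑ i, x i ^ 2 = A + B := by
      rw [← Equiv.sum_comp e (fun i => x i ^ 2), Fintype.sum_sum_type]
    obtain ⟨P, hP⟩ := ih x₁
    obtain ⟨Q, hQ⟩ := ih x₂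
    rw [← hA] at hP
    rw [← hB] at hQ
    have key : ∃ N : Matrix (Fin (2^k) ⊕ Fin (2^k)) (Fin (2^k) ⊕ Fin (2^k)) K,
        N * Nᵀ = (A + B) • 1 := by
      by_cases hA0 : A = 0
      · by_cases hB0 : B = 0
        · exact ⟨0, by simp [hA0, hB0]⟩
        · have hQ' := flipMul Q B hB0 hQ
          refine ⟨Matrix.fromBlocks 0 Q Qᵀ 0, ?_⟩
          rw [Matrix.fromBlocks_transpose, Matrix.fromBlocks_multiply]
          simp only [Matrix.transpose_transpose, Matrix.transpose_zero,
            Matrix.mul_zero, Matrix.zero_mul, add_zero, zero_add, hQ, hQ']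
          rw [hA0, zero_add, smul_one_blocks]
      · have hP' := flipMul P A hA0 hP
        by_cases hB0 : B = 0
        · refine ⟨Matrix.fromBlocks P 0 0 Pᵀ, ?_⟩
          rw [Matrix.fromBlocks_transpose, Matrix.fromBlocks_multiply]
          simp only [Matrix.transpose_transpose, Matrix.transpose_zero,
            Matrix.mul_zero, Matrix.zero_mul, add_zero, zero_add, hP, hP']
          rw [hB0, add_zero, smul_one_blocks]
        · have hQ' := flipMul Q B hB0 hQ
          set S := B⁻¹ • (Qᵀ * Pᵀ * Q) with hS
          have hSt : Sᵀ = B⁻¹ • (Qᵀ * (P * Q)) := by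
            rw [hS, Matrix.transpose_smul, Matrix.transpose_mul, Matrix.transpose_mul,
              Matrix.transpose_transpose, Matrix.transpose_transpose]
          have h12 : P * (-Qᵀ)ᵀ + Q * Sᵀ = 0 := by
            rw [hSt, Matrix.transpose_neg, Matrix.transpose_transpose, Matrix.mul_smul,
              ← Matrix.mul_assoc, hQ, Matrix.smul_mul, Matrix.one_mul, smul_smul,
              inv_mul_cancel₀ hB0, one_smul, Matrix.mul_neg]
            exact neg_add_cancel _
          have h21 : (-Qᵀ) * Pᵀ + S * Qᵀ = 0 := by
            rw [hS, Matrix.smul_mul, Matrix.mul_assoc (Qᵀ * Pᵀ), hQ, Matrix.mul_smul,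
              Matrix.mul_one, smul_smul, inv_mul_cancel₀ hB0, one_smul, Matrix.neg_mul]
            exact neg_add_cancel _
          have h22 : (-Qᵀ) * (-Qᵀ)ᵀ + S * Sᵀ = (A + B) • 1 := by
            have hSS : S * Sᵀ = A • 1 := by
              rw [hS, hSt, Matrix.smul_mul, Matrix.mul_smul, smul_smul]
              have : Qᵀ * Pᵀ * Q * (Qᵀ * (P * Q)) = (B * A * B) • 1 := by
                rw [Matrix.mul_assoc (Qᵀ * Pᵀ), ← Matrix.mul_assoc Q, hQ,
                  Matrix.smul_mul, Matrix.one_mul, Matrix.mul_smul,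
                  Matrix.mul_assoc Qᵀ, ← Matrix.mul_assoc Pᵀ, hP',
                  Matrix.smul_mul, Matrix.one_mul, Matrix.mul_smul, hQ', smul_smul, smul_smul]
              rw [this, smul_smul]
              congr 1
              field_simp
            rw [hSS, Matrix.transpose_neg, Matrix.transpose_transpose, Matrix.neg_mul,
              Matrix.mul_neg, neg_neg, hQ']
            rw [add_smul, add_comm]
          refine ⟨Matrix.fromBlocks P Q (-Qᵀ) S, ?_⟩
          rw [Matrix.fromBlocks_transpose, Matrix.fromBlocks_multiply, h12, h21, h22, hP, hQ,
            ← add_smul, smul_one_blocks]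
    obtain ⟨N, hN⟩ := key
    refine ⟨N.submatrix e.symm e.symm, ?_⟩
    rw [hsum, Matrix.transpose_submatrix, Matrix.submatrix_mul_equiv, hN]
    simp [Matrix.submatrix_smul, Matrix.submatrix_one_equiv]
lemma pfister_mul {K : Type*} [Field K] (k : ℕ) (x y : Fin (2^k) → K) :
    ∃ z : Fin (2^k) → K, (∑ i, x i ^ 2) * (∑ i, y i ^ 2) = ∑ i, z i ^ 2 := by
  set a := ∑ i, x i ^ 2 with ha
  by_cases h0 : a = 0
  · exact ⟨0, by simp [h0]⟩
  obtain ⟨M, hM⟩ := pfister_matrix k x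
  rw [← ha] at hM
  have hM' := flipMul M a h0 hM
  refine ⟨M.mulVec y, ?_⟩
  have hdot : ∀ v : Fin (2^k) → K, ∑ i, v i ^ 2 = v ⬝ᵥ v := by
    intro v; simp [dotProduct, sq]
  rw [hdot, hdot]
  have h1 : M.mulVec y = Matrix.vecMul y Mᵀ := (Matrix.mulVec_transpose Mᵀ y).symm ▸ by
    rw [← Matrix.mulVec_transpose, Matrix.transpose_transpose]
  rw [Matrix.dotProduct_mulVec, h1, Matrix.vecMul_vecMul, hM']
  have h2 : y ᵥ* ((a : K) • (1 : Matrix (Fin (2^k)) (Fin (2^k)) K)) = a • y := by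
    ext j
    simp [Matrix.vecMul, dotProduct, Matrix.smul_apply, Matrix.one_apply, mul_comm]
  rw [h2, smul_dotProduct, smul_eq_mul]
lemma zero_sum_neg_one {K : Type*} [Field K] (l : ℕ) (x : Fin (l+1) → K)
    (hx : ∑ i, x i ^ 2 = 0) (j : Fin (l+1)) (hj : x j ≠ 0) :
    ∃ g : Fin l → K, -1 = ∑ i, g i ^ 2 := by
  have h := Fin.sum_univ_succAbove (fun i => x i ^ 2) j
  rw [hx] at h
  refine ⟨fun i => x (j.succAbove i) / x j, ?_⟩
  have hxj : x j ^ 2 ≠ 0 := pow_ne_zero 2 hj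
  have hsum : ∑ i : Fin l, x (j.succAbove i) ^ 2 = -(x j ^ 2) := by linear_combination -h
  calc (-1 : K) = -(x j ^2) / (x j ^2) := by field_simp
    _ = (∑ i : Fin l, x (j.succAbove i) ^ 2) / x j ^ 2 := by rw [hsum]
    _ = ∑ i : Fin l, (x (j.succAbove i) / x j) ^ 2 := by
        rw [Finset.sum_div]; congr 1; ext i; rw [div_pow]

lemma level_pow {K : Type*} [Field K] (n : ℕ) (f : Fin n → K) (hn : -1 = ∑ i, f i ^ 2) :
    ∃ k : ℕ, (∃ g : Fin (2 ^ k) → K, -1 = ∑ i, g i ^ 2) ∧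
      ∀ m : ℕ, m < 2 ^ k → ¬∃ g : Fin m → K, -1 = ∑ i, g i ^ 2 := by
  classical
  set Pr : ℕ → Prop := fun m => ∃ g : Fin m → K, -1 = ∑ i, g i ^ 2 with hPr
  have hex : ∃ m, Pr m := ⟨n, f, hn⟩
  set m := Nat.find hex with hmdef
  have hm : Pr m := Nat.find_spec hex
  have hmin : ∀ m' < m, ¬ Pr m' := fun m' h => Nat.find_min hex h
  have hnot0 : ¬ Pr 0 := by
    rintro ⟨g, hg⟩
    simp at hg
  have hm0 : 0 < m := by
    rcases Nat.eq_zero_or_pos m with h | h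
    · exact absurd (h ▸ hm) hnot0
    · exact h
  set k := Nat.log 2 m with hk
  have h1 : 2 ^ k ≤ m := Nat.pow_log_le_self 2 (by omega)
  have h2 : m < 2 ^ (k + 1) := Nat.lt_pow_succ_log_self (by norm_num) m
  -- main claim
  have hclaim : Pr (2 ^ k) := by
    rcases eq_or_lt_of_le h1 with heq | hlt
    · rw [heq]; exact hm
    · -- m = 2^k + r with 1 ≤ r < 2^k
      obtain ⟨r, hr⟩ : ∃ r, 2 ^ k + r = m := ⟨m - 2^k, by omega⟩
      have hr1 : 1 ≤ r := by omega
      have hr2 : r < 2 ^ k := by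
        have : 2 ^ (k+1) = 2^k + 2^k := by rw [pow_succ]; ring
        omega
      obtain ⟨g, hg⟩ := hm
      set F : Fin (2^k + r) → K := fun i => g (finCongr hr i) with hF
      have hFsum : ∑ i, F i ^ 2 = ∑ i, g i ^ 2 := Equiv.sum_comp (finCongr hr) (fun i => g i ^ 2)
      set X : Fin (2^k) → K := fun i => F (finSumFinEquiv (Sum.inl i)) with hX
      set G : Fin r → K := fun i => F (finSumFinEquiv (Sum.inr i)) with hG
      set A := ∑ i, X i ^ 2 with hA
      set C := ∑ i, G i ^ 2 with hC
      have hsplit : (-1 : K) = A + C := by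
        rw [hg, ← hFsum, ← Equiv.sum_comp finSumFinEquiv (fun i => F i ^ 2),
          Fintype.sum_sum_type]
      have hA0 : A ≠ 0 := by
        intro h0
        by_cases hz : ∀ i, X i = 0
        · have : C = -1 := by
            rw [hsplit, h0, zero_add]
          exact hmin r (by omega) ⟨G, by rw [← hC, this]⟩
        · push_neg at hz
          obtain ⟨j, hj⟩ := hz
          have hpk : 2 ^ k = (2 ^ k - 1) + 1 := by
            have := Nat.one_le_two_pow (n := k); omega
          set X' : Fin ((2^k - 1) + 1) → K := fun i => X (finCongr hpk.symm i) with hX'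
          have hX'sum : ∑ i, X' i ^ 2 = A :=
            hA ▸ Equiv.sum_comp (finCongr hpk.symm) (fun i => X i ^ 2)
          obtain ⟨g', hg'⟩ := zero_sum_neg_one (2^k - 1) X' (by rw [hX'sum, h0])
            (finCongr hpk j) (by simpa [hX'] using hj)
          exact hmin (2^k - 1) (by omega) ⟨g', hg'⟩
      -- build Y : padded (1, G, 0...)
      have hys : (r + 1) + (2^k - (r+1)) = 2^k := by omega
      set eY : Fin (r+1) ⊕ Fin (2^k - (r+1)) ≃ Fin (2^k) :=
        finSumFinEquiv.trans (finCongr hys) with heY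
      set Y : Fin (2^k) → K := fun i => Sum.elim (Fin.cons 1 G) 0 (eY.symm i) with hY
      have hYsum : ∑ i, Y i ^ 2 = 1 + C := by
        rw [hY, ← Equiv.sum_comp eY (fun i => (Sum.elim (Fin.cons (1:K) G) 0 (eY.symm i)) ^ 2)]
        simp only [Equiv.symm_apply_apply]
        rw [Fintype.sum_sum_type]
        have hz : ∑ i : Fin (2^k - (r+1)), ((Sum.elim (Fin.cons (1:K) G) 0 (Sum.inr i)) ^ 2) = 0 := by
          simp
        rw [hz, add_zero]
        rw [show (∑ i : Fin (r+1), (Sum.elim (Fin.cons (1:K) G) 0 (Sum.inl i)) ^ 2)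
            = ∑ i : Fin (r+1), (Fin.cons (1:K) G i) ^ 2 from rfl]
        rw [Fin.sum_univ_succ]
        simp [hC]
      have hYA : ∑ i, Y i ^ 2 = -A := by
        rw [hYsum]
        linear_combination -hsplit
      obtain ⟨z, hzz⟩ := pfister_mul k X Y
      rw [← hA, hYA] at hzz
      refine ⟨fun i => z i / A, ?_⟩
      have hA2 : A ^ 2 ≠ 0 := pow_ne_zero 2 hA0
      have hzsum : ∑ i, z i ^ 2 = -(A^2) := by rw [← hzz]; ring
      calc (-1 : K) = -(A^2) / A^2 := by field_simp
        _ = (∑ i, z i ^ 2) / A^2 := by rw [hzsum]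
        _ = ∑ i, (z i / A) ^ 2 := by
            rw [Finset.sum_div]; congr 1; ext i; rw [div_pow]
  have hm2k : m = 2 ^ k := by
    by_contra hne
    have : 2 ^ k < m := lt_of_le_of_ne h1 (fun h => hne h.symm)
    exact hmin (2^k) this hclaim
  exact ⟨k, hclaim, fun m' hm' => hmin m' (by omega)⟩

theorem level_is_power_of_two (K : Type*) [Field K]
    (n : ℕ) (f : Fin n → K) (hn : -1 = ∑ i, f i ^ 2) :
    (∃ k : ℕ, (∃ g : Fin (2 ^ k) → K, -1 = ∑ i, g i ^ 2) ∧
      ∀ m : ℕ, m < 2 ^ k → ¬∃ g : Fin m → K, -1 = ∑ i, g i ^ 2) ∧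
    ((∃ a b c : K, a ^ 2 + b ^ 2 + c ^ 2 = -1) →
      ∃ a b : K, a ^ 2 + b ^ 2 = -1) := by
  obtain ⟨k, hk, hmin⟩ := level_pow n f hn
  refine ⟨⟨k, hk, hmin⟩, ?_⟩
  rintro ⟨a, b, c, habc⟩
  have h3 : ∃ g : Fin 3 → K, -1 = ∑ i, g i ^ 2 :=
    ⟨![a, b, c], by rw [Fin.sum_univ_three]; simp [← habc]⟩
  have hk3 : 2 ^ k ≤ 3 := by
    by_contra h
    push_neg at h
    exact hmin 3 h h3
  have hk1 : k ≤ 1 := by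
    by_contra hh
    push_neg at hh
    have h4 : (4 : ℕ) ≤ 2 ^ k := by
      calc (4 : ℕ) = 2 ^ 2 := rfl
        _ ≤ 2 ^ k := Nat.pow_le_pow_right (by norm_num) hh
    omega
  interval_cases k
  · obtain ⟨g, hg⟩ := hk
    have hg' : ∑ i : Fin (2 ^ 0), g i ^ 2 = g 0 ^ 2 := Fin.sum_univ_one (fun i => g i ^ 2)
    have h := hg.trans hg'
    exact ⟨g 0, 0, by linear_combination -h⟩
  · obtain ⟨g, hg⟩ := hk
    have hg' : ∑ i : Fin (2 ^ 1), g i ^ 2 = g 0 ^ 2 + g 1 ^ 2 := Fin.sum_univ_two (fun i => g i ^ 2)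
    exact ⟨g 0, g 1, (hg.trans hg').symm⟩
end
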